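/- arXiv:1406.1281 — 7 statements merged into one kernel-verified Lean document; each statement's English description precedes it below -/
import Mathlib

section
/- For integers k ≥ 1 and m ≥ 1, every nonzero ideal of R_{k,m} contains the element u^{k-1} v^{m-1}; equivalently, the principal ideal ⟨u^{k-1} v^{m-1}⟩ is the unique minimal nonzero ideal (the socle) of R_{k,m}, and it is contained in every nonzero ideal. -/
set_option maxHeartbeats 1000000
set_option synthInstance.maxHeartbeats 400000

open MvPolynomial

/-- The ring `R_{k,m} = F_2[u,v]/⟨u^k, v^m⟩`. -/
noncomputable abbrev Rkm (k m : ℕ) : Type :=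
  MvPolynomial (Fin 2) (ZMod 2) ⧸
    (Ideal.span {(X 0 : MvPolynomial (Fin 2) (ZMod 2)) ^ k, (X 1 : MvPolynomial (Fin 2) (ZMod 2)) ^ m})

/-- `u`, the image of `X 0` in `R_{k,m}`. -/
noncomputable def Rkm.u (k m : ℕ) : Rkm k m := Ideal.Quotient.mk _ (X 0)

/-- `v`, the image of `X 1` in `R_{k,m}`. -/
noncomputable def Rkm.v (k m : ℕ) : Rkm k m := Ideal.Quotient.mk _ (X 1)

namespace RkmAux

noncomputable abbrev J (k m : ℕ) : Ideal (MvPolynomial (Fin 2) (ZMod 2)) :=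
  Ideal.span {(X 0 : MvPolynomial (Fin 2) (ZMod 2)) ^ k, (X 1 : MvPolynomial (Fin 2) (ZMod 2)) ^ m}

lemma fin2_ext {d d' : Fin 2 →₀ ℕ} (h0 : d 0 = d' 0) (h1 : d 1 = d' 1) : d = d' := by
  ext i
  fin_cases i <;> assumption

lemma pair_apply0 (x y : ℕ) :
    ((Finsupp.single 0 x + Finsupp.single 1 y : Fin 2 →₀ ℕ)) 0 = x := by
  simp [Finsupp.single_apply]

lemma pair_apply1 (x y : ℕ) :
    ((Finsupp.single 0 x + Finsupp.single 1 y : Fin 2 →₀ ℕ)) 1 = y := by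
  simp [Finsupp.single_apply]

lemma monomial_mem_J (k m : ℕ) (c : ZMod 2) (d : Fin 2 →₀ ℕ)
    (h : k ≤ d 0 ∨ m ≤ d 1) : (monomial d c : MvPolynomial (Fin 2) (ZMod 2)) ∈ J k m := by
  rcases h with h | h
  · have hle : Finsupp.single (0 : Fin 2) k ≤ d := Finsupp.single_le_iff.mpr h
    have : (monomial d c : MvPolynomial (Fin 2) (ZMod 2)) =
        monomial (d - Finsupp.single 0 k) c * (X 0) ^ k := by
      rw [X_pow_eq_monomial, monomial_mul, mul_one, tsub_add_cancel_of_le hle]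
    rw [this]
    exact Ideal.mul_mem_left _ _ (Ideal.subset_span (by simp))
  · have hle : Finsupp.single (1 : Fin 2) m ≤ d := Finsupp.single_le_iff.mpr h
    have : (monomial d c : MvPolynomial (Fin 2) (ZMod 2)) =
        monomial (d - Finsupp.single 1 m) c * (X 1) ^ m := by
      rw [X_pow_eq_monomial, monomial_mul, mul_one, tsub_add_cancel_of_le hle]
    rw [this]
    exact Ideal.mul_mem_left _ _ (Ideal.subset_span (by simp))

lemma target_not_mem (k m : ℕ) (hk : 1 ≤ k) (hm : 1 ≤ m) :
    (monomial (Finsupp.single (0 : Fin 2) (k-1) + Finsupp.single 1 (m-1)) (1 : ZMod 2)) ∉ J k m := by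
  intro h
  rw [Ideal.mem_span_pair] at h
  obtain ⟨f, g, hfg⟩ := h
  set t := Finsupp.single (0 : Fin 2) (k-1) + Finsupp.single 1 (m-1) with ht
  have hc1 : ¬ (Finsupp.single (0 : Fin 2) k ≤ t) := by
    rw [Finsupp.single_le_iff, ht, pair_apply0]
    omega
  have hc2 : ¬ (Finsupp.single (1 : Fin 2) m ≤ t) := by
    rw [Finsupp.single_le_iff, ht, pair_apply1]
    omega
  have h1 : coeff t (f * (X 0 : MvPolynomial (Fin 2) (ZMod 2)) ^ k) = 0 := by
    rw [X_pow_eq_monomial, coeff_mul_monomial', if_neg hc1]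
  have h2 : coeff t (g * (X 1 : MvPolynomial (Fin 2) (ZMod 2)) ^ m) = 0 := by
    rw [X_pow_eq_monomial, coeff_mul_monomial', if_neg hc2]
  have := congrArg (coeff t) hfg
  rw [coeff_add, h1, h2, coeff_monomial, if_pos rfl] at this
  simp at this

lemma socle_mem (k m : ℕ) (hk : 1 ≤ k) (hm : 1 ≤ m) (r : Rkm k m) (hr : r ≠ 0) :
    ∃ s : Rkm k m, s * r = Rkm.u k m ^ (k-1) * Rkm.v k m ^ (m-1) := by
  classical
  obtain ⟨p, rfl⟩ := Ideal.Quotient.mk_surjective r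
  set mk := Ideal.Quotient.mk (J k m) with hmkdef
  set p' : MvPolynomial (Fin 2) (ZMod 2) :=
    ∑ d ∈ p.support.filter (fun d => d 0 < k ∧ d 1 < m), monomial d (coeff d p) with hp'
  -- mk p' = mk p
  have hmk : mk p' = mk p := by
    have hrest : (∑ d ∈ p.support.filter (fun d => ¬(d 0 < k ∧ d 1 < m)),
        monomial d (coeff d p)) ∈ J k m := by
      apply Ideal.sum_mem
      intro d hd
      rw [Finset.mem_filter] at hd
      exact monomial_mem_J k m _ d (by omega)
    have hsplit : p' + (∑ d ∈ p.support.filter (fun d => ¬(d 0 < k ∧ d 1 < m)),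
        monomial d (coeff d p)) = p := by
      rw [hp', Finset.sum_filter_add_sum_filter_not]
      exact (as_sum p).symm
    have heq : p' - p = -(∑ d ∈ p.support.filter (fun d => ¬(d 0 < k ∧ d 1 < m)),
        monomial d (coeff d p)) := by
      linear_combination hsplit
    rw [hmkdef, Ideal.Quotient.eq, heq]
    exact neg_mem hrest
  have hp'ne : p' ≠ 0 := by
    intro h
    apply hr
    rw [← hmk, h, map_zero]
  -- coefficients of p'
  have hcoeff : ∀ d, coeff d p' =
      if d ∈ p.support.filter (fun d => d 0 < k ∧ d 1 < m) then coeff d p else 0 := by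
    intro d
    rw [hp', coeff_sum]
    rw [Finset.sum_congr rfl (fun d' _ => coeff_monomial d d' (coeff d' p))]
    exact Finset.sum_ite_eq' _ d _
  have hsupp : ∀ d ∈ p'.support, d 0 < k ∧ d 1 < m := by
    intro d hd
    rw [MvPolynomial.mem_support_iff, hcoeff] at hd
    by_contra hcon
    rw [if_neg] at hd
    · exact hd rfl
    · intro hmem
      rw [Finset.mem_filter] at hmem
      exact hcon hmem.2
  -- choose minimal monomial
  have hA : p'.support.Nonempty := by
    rw [Finset.nonempty_iff_ne_empty]
    simpa [MvPolynomial.support_eq_empty] using hp'ne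
  set a := (p'.support.image fun d => d 0).min' (hA.image _) with ha
  have hane : (p'.support.filter fun d => d 0 = a).Nonempty := by
    obtain ⟨d, hd, hd0⟩ := Finset.mem_image.mp ((p'.support.image fun d => d 0).min'_mem (hA.image _))
    exact ⟨d, Finset.mem_filter.mpr ⟨hd, by rw [ha]; exact hd0⟩⟩
  set b := ((p'.support.filter fun d => d 0 = a).image fun d => d 1).min' (hane.image _) with hb
  obtain ⟨d, hdB, hd1⟩ := Finset.mem_image.mp
    (((p'.support.filter fun d => d 0 = a).image fun d => d 1).min'_mem (hane.image _))
  rw [← hb] at hd1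
  rw [Finset.mem_filter] at hdB
  obtain ⟨hdA, hd0⟩ := hdB
  have hak : a < k := by have := (hsupp d hdA).1; omega
  have hbm : b < m := by have := (hsupp d hdA).2; omega
  have hamin : ∀ d' ∈ p'.support, a ≤ d' 0 := fun d' hd' =>
    Finset.min'_le _ _ (Finset.mem_image_of_mem _ hd')
  have hbmin : ∀ d' ∈ p'.support, d' 0 = a → b ≤ d' 1 := fun d' hd' h0 =>
    Finset.min'_le _ _ (Finset.mem_image_of_mem _ (Finset.mem_filter.mpr ⟨hd', h0⟩))
  -- the multiplier
  set e : Fin 2 →₀ ℕ := Finsupp.single 0 (k-1-a) + Finsupp.single 1 (m-1-b) with he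
  refine ⟨mk (monomial e 1), ?_⟩
  rw [← hmk, ← map_mul]
  have hprod : monomial e (1 : ZMod 2) * p' =
      ∑ d' ∈ p'.support, monomial (e + d') (coeff d' p') := by
    conv_lhs => rw [as_sum p']
    rw [Finset.mul_sum]
    exact Finset.sum_congr rfl (fun d' _ => by rw [monomial_mul, one_mul])
  rw [hprod, map_sum]
  have hzero : ∀ d' ∈ p'.support, d' ≠ d → mk (monomial (e + d') (coeff d' p')) = 0 := by
    intro d' hd' hne
    rw [Ideal.Quotient.eq_zero_iff_mem]
    apply monomial_mem_J
    have h0 : a ≤ d' 0 := hamin d' hd'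
    rcases lt_or_eq_of_le h0 with hlt | heq
    · left
      rw [Finsupp.add_apply, he, pair_apply0]
      omega
    · right
      have hb' : b ≤ d' 1 := hbmin d' hd' heq.symm
      have hbne : d' 1 ≠ b := by
        intro hbeq
        exact hne (fin2_ext (by omega) (by omega))
      rw [Finsupp.add_apply, he, pair_apply1]
      omega
  rw [Finset.sum_eq_single_of_mem d hdA hzero]
  have hed : e + d = Finsupp.single (0 : Fin 2) (k-1) + Finsupp.single 1 (m-1) := by
    apply fin2_ext
    · rw [Finsupp.add_apply, he, pair_apply0, pair_apply0]
      omega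
    · rw [Finsupp.add_apply, he, pair_apply1, pair_apply1]
      omega
  have hcd : coeff d p' = 1 := by
    have hne : coeff d p' ≠ 0 := MvPolynomial.mem_support_iff.mp hdA
    have : ∀ c : ZMod 2, c ≠ 0 → c = 1 := by decide
    exact this _ hne
  rw [hed, hcd]
  -- identify with u^(k-1) * v^(m-1)
  show mk _ = _
  rw [Rkm.u, Rkm.v]
  rw [show (Ideal.Quotient.mk (Ideal.span {(X 0 : MvPolynomial (Fin 2) (ZMod 2)) ^ k, (X 1 : MvPolynomial (Fin 2) (ZMod 2)) ^ m}) (X 0)) ^ (k-1) *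
      (Ideal.Quotient.mk _ (X 1)) ^ (m-1) = mk ((X 0) ^ (k-1) * (X 1) ^ (m-1)) by
    rw [map_mul, map_pow, map_pow]]
  congr 1
  rw [X_pow_eq_monomial, X_pow_eq_monomial, monomial_mul, one_mul]

end RkmAux

/-- Every nonzero ideal of `R_{k,m}` contains `u^{k-1} v^{m-1}`; equivalently, the principal
ideal `⟨u^{k-1} v^{m-1}⟩` is nonzero, is contained in every nonzero ideal, and hence is the
unique minimal nonzero ideal (the socle) of `R_{k,m}`. -/
theorem Rkm_socle (k m : ℕ) (hk : 1 ≤ k) (hm : 1 ≤ m) :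
    (Ideal.span {Rkm.u k m ^ (k - 1) * Rkm.v k m ^ (m - 1)} : Ideal (Rkm k m)) ≠ ⊥ ∧
    ∀ I : Ideal (Rkm k m), I ≠ ⊥ →
      Rkm.u k m ^ (k - 1) * Rkm.v k m ^ (m - 1) ∈ I ∧
      Ideal.span {Rkm.u k m ^ (k - 1) * Rkm.v k m ^ (m - 1)} ≤ I := by
  have hne : Rkm.u k m ^ (k - 1) * Rkm.v k m ^ (m - 1) ≠ 0 := by
    have : Rkm.u k m ^ (k - 1) * Rkm.v k m ^ (m - 1) =
        Ideal.Quotient.mk _ (monomial (Finsupp.single (0 : Fin 2) (k-1) + Finsupp.single 1 (m-1))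
          (1 : ZMod 2)) := by
      rw [Rkm.u, Rkm.v, ← map_pow, ← map_pow, ← map_mul]
      congr 1
      rw [X_pow_eq_monomial, X_pow_eq_monomial, monomial_mul, one_mul]
    rw [this, Ne, Ideal.Quotient.eq_zero_iff_mem]
    exact RkmAux.target_not_mem k m hk hm
  constructor
  · rw [Ne, Ideal.span_singleton_eq_bot]
    exact hne
  · intro I hI
    obtain ⟨r, hrI, hrne⟩ := Submodule.exists_mem_ne_zero_of_ne_bot hI
    obtain ⟨s, hs⟩ := RkmAux.socle_mem k m hk hm r hrne
    have hmem : Rkm.u k m ^ (k - 1) * Rkm.v k m ^ (m - 1) ∈ I := hs ▸ I.mul_mem_left s hrI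
    exact ⟨hmem, (Ideal.span_singleton_le_iff_mem I).mpr hmem⟩
end

section
/- For integers k ≥ 1 and m ≥ 1, define χ : R_{k,m} → ℤ by χ(x) = (-1)^{N(x)}, where N(x) is the number of nonzero coefficients c_{ij} in the unique representation x = Σ_{0≤i≤k-1, 0≤j≤m-1} c_{ij} u^i v^j with c_{ij} ∈ F_2. Then χ is an additive character of (R_{k,m}, +), i.e., χ(x + y) = χ(x)·χ(y) for all x, y, and the restriction of χ to every nonzero ideal of R_{k,m} is nontrivial (for every nonzero ideal I there exists x ∈ I with χ(x) = -1); that is, χ is a generating character for R_{k,m}. -/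
open MvPolynomial

/-!
Over `F_2`, `(-1)^{N(x)} = ∏_{ij} (-1)^{c_{ij}}` and `c ↦ (-1)^c` is a homomorphism
`(F_2, +) → {±1}`, so `χ` is additive. For `x ≠ 0`, pick `(i, j)` minimal (componentwise) among
the indices of nonzero coefficients of `x`. Multiplying by `u^{k-1-i} v^{m-1-j}` kills every
monomial `u^a v^b` of `x` with `a > i` or `b > j`, and by minimality the only remaining one is
`u^i v^j`, so every nonzero ideal contains the socle element `u^{k-1} v^{m-1}`. This is a single
basis vector, on which `χ = -1`.
-/

open Finset

section SignOfSupport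

variable {ι : Type*} [Fintype ι]

lemma neg_one_pow_card_ne_zero_eq_prod (f : ι → ZMod 2) :
    (-1 : ℤ) ^ #{p | f p ≠ 0} = ∏ p, (-1 : ℤ) ^ (f p).val := by
  rw [← prod_const, prod_filter]
  refine prod_congr rfl fun p _ => ?_
  generalize f p = c
  revert c
  decide

lemma neg_one_pow_card_ne_zero_add (f g : ι → ZMod 2) :
    (-1 : ℤ) ^ #{p | f p + g p ≠ 0} = (-1 : ℤ) ^ #{p | f p ≠ 0} * (-1 : ℤ) ^ #{p | g p ≠ 0} := by
  simp only [neg_one_pow_card_ne_zero_eq_prod, ← prod_mul_distrib]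
  refine prod_congr rfl fun p _ => ?_
  generalize f p = a
  generalize g p = b
  revert a b
  decide

lemma card_single_ne_zero {M : Type*} [Zero M] [DecidableEq M] (i : ι) {a : M} (ha : a ≠ 0) :
    #{p | Finsupp.single i a p ≠ 0} = 1 := by
  classical
  rw [card_eq_one]
  exact ⟨i, by ext p; simp [Finsupp.single_apply, ha, eq_comm]⟩

end SignOfSupport

namespace Rkm

variable {k m : ℕ}

lemma u_pow_eq_zero {a : ℕ} (ha : k ≤ a) : u k m ^ a = 0 := by
  refine pow_eq_zero_of_le ha ?_
  rw [u, ← map_pow, Ideal.Quotient.eq_zero_iff_mem]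
  exact Ideal.subset_span (by simp)

lemma v_pow_eq_zero {b : ℕ} (hb : m ≤ b) : v k m ^ b = 0 := by
  refine pow_eq_zero_of_le hb ?_
  rw [v, ← map_pow, Ideal.Quotient.eq_zero_iff_mem]
  exact Ideal.subset_span (by simp)

lemma monomial_mul_monomial (a b i j : ℕ) :
    u k m ^ a * v k m ^ b * (u k m ^ i * v k m ^ j) = u k m ^ (a + i) * v k m ^ (b + j) := by
  ring

lemma monomial_mul_monomial_eq_zero {a b i j : ℕ} (h : k ≤ a + i ∨ m ≤ b + j) :
    u k m ^ a * v k m ^ b * (u k m ^ i * v k m ^ j) = 0 := by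
  rw [monomial_mul_monomial]
  rcases h with h | h
  · rw [u_pow_eq_zero h, zero_mul]
  · rw [v_pow_eq_zero h, mul_zero]

lemma exists_mul_eq_socle (B : Module.Basis (Fin k × Fin m) (ZMod 2) (Rkm k m))
    (hB : ∀ p : Fin k × Fin m, B p = u k m ^ (p.1 : ℕ) * v k m ^ (p.2 : ℕ))
    {x : Rkm k m} (hx : x ≠ 0) : ∃ y, y * x = u k m ^ (k - 1) * v k m ^ (m - 1) := by
  have hsupp : (B.repr x).support.Nonempty := by simpa using hx
  obtain ⟨p₀, hp₀⟩ := Finset.exists_minimal hsupp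
  refine ⟨u k m ^ (k - 1 - p₀.1) * v k m ^ (m - 1 - p₀.2), ?_⟩
  have h₀ : B.repr x p₀ = 1 := by
    have := Finsupp.mem_support_iff.mp hp₀.prop
    generalize B.repr x p₀ = c at this
    revert c
    decide
  have hi := p₀.1.isLt
  have hj := p₀.2.isLt
  rw [← B.sum_repr x, mul_sum, sum_eq_single p₀, mul_smul_comm, hB, h₀, one_smul,
    monomial_mul_monomial, Nat.sub_add_cancel (by omega), Nat.sub_add_cancel (by omega)]
  · intro p _ hp
    by_cases hps : p ∈ (B.repr x).support
    · have hnle : ¬ p ≤ p₀ := fun hle => hp (hp₀.eq_of_le hps hle)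
      rw [Prod.le_def, Fin.le_def, Fin.le_def, not_and_or, not_le, not_le] at hnle
      rw [mul_smul_comm, hB, monomial_mul_monomial_eq_zero (by omega), smul_zero]
    · rw [Finsupp.notMem_support_iff.mp hps, zero_smul, mul_zero]
  · simp

end Rkm

theorem Rkm_generating_character_general (k m : ℕ)
    (B : Module.Basis (Fin k × Fin m) (ZMod 2) (Rkm k m))
    (hB : ∀ p : Fin k × Fin m, B p = Rkm.u k m ^ (p.1 : ℕ) * Rkm.v k m ^ (p.2 : ℕ))
    (χ : Rkm k m → ℤ)
    (hχ : ∀ x : Rkm k m,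
      χ x = (-1 : ℤ) ^ (Finset.univ.filter fun p : Fin k × Fin m => B.repr x p ≠ 0).card) :
    (∀ x y : Rkm k m, χ (x + y) = χ x * χ y) ∧
    (∀ I : Ideal (Rkm k m), I ≠ ⊥ → ∃ x ∈ I, χ x = -1) := by
  refine ⟨fun x y => ?_, fun I hI => ?_⟩
  · simp only [hχ, map_add, Finsupp.add_apply]
    exact neg_one_pow_card_ne_zero_add _ _
  obtain ⟨x, hxI, hx⟩ := (Submodule.ne_bot_iff I).mp hI
  obtain ⟨y, hy⟩ := Rkm.exists_mul_eq_socle B hB hx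
  have : Nontrivial (Rkm k m) := nontrivial_of_ne x 0 hx
  obtain ⟨⟨⟨i, hi⟩, ⟨j, hj⟩⟩⟩ := B.index_nonempty
  have hsocle : Rkm.u k m ^ (k - 1) * Rkm.v k m ^ (m - 1) =
      B (⟨k - 1, by omega⟩, ⟨m - 1, by omega⟩) := by rw [hB]
  refine ⟨y * x, I.mul_mem_left y hxI, ?_⟩
  rw [hχ, hy, hsocle, B.repr_self, card_single_ne_zero _ one_ne_zero, pow_one]

/-- Given the `F_2`-basis `u^i v^j` of `R_{k,m}`, the map `χ(x) = (-1)^{N(x)}`, where `N(x)`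
is the number of nonzero coefficients of `x` in this basis, is an additive character of
`(R_{k,m},+)` whose restriction to every nonzero ideal is nontrivial; i.e. `χ` is a
generating character for `R_{k,m}`. -/
theorem Rkm_generating_character (k m : ℕ) (hk : 1 ≤ k) (hm : 1 ≤ m)
    (B : Module.Basis (Fin k × Fin m) (ZMod 2) (Rkm k m))
    (hB : ∀ p : Fin k × Fin m, B p = Rkm.u k m ^ (p.1 : ℕ) * Rkm.v k m ^ (p.2 : ℕ))
    (χ : Rkm k m → ℤ)
    (hχ : ∀ x : Rkm k m,
      χ x = (-1 : ℤ) ^ (Finset.univ.filter fun p : Fin k × Fin m => B.repr x p ≠ 0).card) :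
    (∀ x y : Rkm k m, χ (x + y) = χ x * χ y) ∧
    (∀ I : Ideal (Rkm k m), I ≠ ⊥ → ∃ x ∈ I, χ x = -1) :=
  Rkm_generating_character_general k m B hB χ hχ
end

section
/- Let k ≥ 1, m ≥ 1 and n ≥ 1 be integers, and let C be a linear code of length n over R_{k,m} (an R_{k,m}-submodule of R_{k,m}^n). Then |C| · |C^⊥| = |R_{k,m}|^n = 2^{kmn}. -/
open MvPolynomial

set_option synthInstance.maxHeartbeats 1000000
set_option maxHeartbeats 1000000

/-! The form `φ` taking the coefficient of `u^(k-1) v^(m-1)` makes `R_{k,m}` a Frobenius algebra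
over `F_2`: no nonzero ideal lies in `ker φ`, because any nonzero element can be multiplied so
that one of its monomials lands on `u^(k-1) v^(m-1)`. Hence `(a, b) ↦ φ (∑ aᵢ bᵢ)` is a
nondegenerate `F_2`-bilinear form on `R_{k,m}^n` for which the orthogonal of an
`R_{k,m}`-submodule `C` is exactly `C^⊥`, so `dim C + dim C^⊥ = dim R_{k,m}^n = kmn`. -/

namespace LinearMap.BilinForm

variable {K A M : Type*} [Field K] [CommRing A] [Algebra K A] [AddCommGroup M] [Module A M]
  [Module K M] [IsScalarTower K A M] {φ : A →ₗ[K] K}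

theorem orthogonal_compBilinForm (hφ : ∀ x, (∀ r, φ (x * r) = 0) → x = 0)
    (B : LinearMap.BilinForm A M) (C : Submodule A M) :
    (φ.compBilinForm B).orthogonal (C.restrictScalars K) =
      (B.orthogonal C).restrictScalars K := by
  ext b
  simp only [Submodule.restrictScalars_mem, mem_orthogonal_iff,
    LinearMap.compBilinForm_apply_apply]
  refine ⟨fun h a ha => hφ _ fun r => ?_, fun h a ha => by simp [h a ha]⟩
  simpa [mul_comm] using h (r • a) (C.smul_mem r ha)

theorem nondegenerate_compBilinForm (hφ : ∀ x, (∀ r, φ (x * r) = 0) → x = 0)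
    {B : LinearMap.BilinForm A M} (hB : B.Nondegenerate) :
    (φ.compBilinForm B).Nondegenerate := by
  refine ⟨fun x hx => hB.1 x fun y => hφ _ fun r => ?_,
    fun y hy => hB.2 y fun x => hφ _ fun r => ?_⟩
  · simpa [mul_comm] using hx (r • y)
  · simpa [mul_comm] using hy (r • x)

variable [FiniteDimensional K M]

theorem finrank_add_finrank_orthogonal_of_compBilinForm
    (hφ : ∀ x, (∀ r, φ (x * r) = 0) → x = 0) {B : LinearMap.BilinForm A M}
    (hB : B.Nondegenerate) (C : Submodule A M) :
    Module.finrank K C + Module.finrank K (B.orthogonal C) = Module.finrank K M := by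
  have hle := Submodule.finrank_le (C.restrictScalars K)
  have h := finrank_orthogonal (nondegenerate_compBilinForm hφ hB) (C.restrictScalars K)
  rw [orthogonal_compBilinForm hφ] at h
  exact h ▸ Nat.add_sub_cancel' hle

theorem card_mul_card_orthogonal [Finite K]
    (hφ : ∀ x, (∀ r, φ (x * r) = 0) → x = 0) {B : LinearMap.BilinForm A M}
    (hB : B.Nondegenerate) (C : Submodule A M) :
    Nat.card C * Nat.card (B.orthogonal C) = Nat.card M := by
  have : Finite M := Module.finite_of_finite K
  rw [Module.natCard_eq_pow_finrank (K := K) (V := C),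
    Module.natCard_eq_pow_finrank (K := K) (V := B.orthogonal C), ← pow_add,
    finrank_add_finrank_orthogonal_of_compBilinForm hφ hB,
    Module.natCard_eq_pow_finrank (K := K) (V := M)]

end LinearMap.BilinForm

theorem nondegenerate_dotProductBilin {A ι : Type*} [CommRing A] [Fintype ι] :
    (dotProductBilin A A : LinearMap.BilinForm A (ι → A)).Nondegenerate :=
  ⟨fun _ hv => dotProduct_eq_zero_iff.1 hv,
    fun _ hw => dotProduct_eq_zero_iff.1 fun v => by rw [dotProduct_comm]; exact hw v⟩

theorem card_mul_card_dotProduct_orthogonal {K A ι : Type*} [Field K] [Finite K] [CommRing A]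
    [Algebra K A] [Module.Finite K A] [Fintype ι] {φ : A →ₗ[K] K}
    (hφ : ∀ x, (∀ r, φ (x * r) = 0) → x = 0) (C : Submodule A (ι → A)) :
    Nat.card C * Nat.card {b : ι → A | ∀ a ∈ C, ∑ i, a i * b i = 0} =
      Nat.card A ^ Fintype.card ι := by
  rw [← Nat.card_eq_fintype_card, ← Nat.card_fun]
  exact LinearMap.BilinForm.card_mul_card_orthogonal hφ nondegenerate_dotProductBilin C

namespace MvPolynomial

variable {σ R : Type*} [CommRing R]

theorem isCompl_restrictSupport_compl (s : Set (σ →₀ ℕ)) :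
    IsCompl (restrictSupport R s) (restrictSupport R sᶜ) := by
  constructor
  · rw [Submodule.disjoint_def]
    intro p hs hsc
    rw [mem_restrictSupport_iff] at hs hsc
    rw [← support_eq_empty, ← Finset.coe_eq_empty, ← Set.subset_empty_iff,
      ← Set.inter_compl_self s]
    exact Set.subset_inter hs hsc
  · rw [codisjoint_iff, restrictSupport_eq_span, restrictSupport_eq_span, ← Submodule.span_union,
      ← Set.image_union, Set.union_compl_self, ← restrictSupport_eq_span, restrictSupport_univ]

theorem restrictScalars_span_monomial_image (S : Set (σ →₀ ℕ)) :
    (Ideal.span ((fun s => monomial s (1 : R)) '' S)).restrictScalars R =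
      restrictSupport R (upperClosure S) := by
  ext p
  simp only [Submodule.restrictScalars_mem, mem_ideal_span_monomial_image,
    mem_restrictSupport_iff, Set.subset_def, SetLike.mem_coe, mem_upperClosure]

noncomputable def quotientSpanMonomialEquiv (S : Set (σ →₀ ℕ)) :
    (MvPolynomial σ R ⧸ Ideal.span ((fun s => monomial s (1 : R)) '' S)) ≃ₗ[R]
      restrictSupport R (upperClosure S : Set (σ →₀ ℕ))ᶜ :=
  (Submodule.Quotient.restrictScalarsEquiv R _).symm ≪≫ₗ
    Submodule.quotEquivOfEq _ _ (restrictScalars_span_monomial_image S) ≪≫ₗ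
    Submodule.quotientEquivOfIsCompl _ _ (isCompl_restrictSupport_compl _)

theorem quotientSpanMonomialEquiv_symm_apply (S : Set (σ →₀ ℕ))
    (w : restrictSupport R (upperClosure S : Set (σ →₀ ℕ))ᶜ) :
    (quotientSpanMonomialEquiv S).symm w = Ideal.Quotient.mk _ (w : MvPolynomial σ R) :=
  rfl

theorem coeff_eq_zero_of_mem_span_monomial_image {S : Set (σ →₀ ℕ)} {p : MvPolynomial σ R}
    (hp : p ∈ Ideal.span ((fun s => monomial s (1 : R)) '' S)) {d : σ →₀ ℕ}
    (hd : d ∉ upperClosure S) : coeff d p = 0 := by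
  by_contra h
  exact hd (mem_upperClosure.2 (mem_ideal_span_monomial_image.1 hp d (mem_support_iff.2 h)))

theorem coeff_quotientSpanMonomialEquiv_mk (S : Set (σ →₀ ℕ)) (p : MvPolynomial σ R)
    {d : σ →₀ ℕ} (hd : d ∉ upperClosure S) :
    coeff d (quotientSpanMonomialEquiv S (Ideal.Quotient.mk _ p) : MvPolynomial σ R) =
      coeff d p := by
  set I := Ideal.span ((fun s => monomial s (1 : R)) '' S)
  set w := quotientSpanMonomialEquiv S (Ideal.Quotient.mk I p)
  have hw : Ideal.Quotient.mk I (w : MvPolynomial σ R) = Ideal.Quotient.mk I p := by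
    rw [← quotientSpanMonomialEquiv_symm_apply, LinearEquiv.symm_apply_apply]
  rw [Ideal.Quotient.mk_eq_mk_iff_sub_mem] at hw
  rw [← sub_eq_zero, ← coeff_sub, coeff_eq_zero_of_mem_span_monomial_image hw hd]

variable (R) in
noncomputable def boxIdeal (κ : σ → ℕ) : Ideal (MvPolynomial σ R) :=
  Ideal.span (Set.range fun i => X i ^ κ i)

theorem boxIdeal_eq_span_monomial_image (κ : σ → ℕ) :
    boxIdeal R κ =
      Ideal.span ((fun s => monomial s (1 : R)) '' Set.range fun i => Finsupp.single i (κ i)) := by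
  rw [boxIdeal, ← Set.range_comp]
  simp only [Function.comp_def, X_pow_eq_monomial]

theorem notMem_upperClosure_range_single_iff (κ : σ → ℕ) (d : σ →₀ ℕ) :
    d ∉ upperClosure (Set.range fun i => Finsupp.single i (κ i)) ↔ ∀ i, d i < κ i := by
  simp [mem_upperClosure, Finsupp.single_le_iff]

noncomputable def quotientBoxIdealEquiv (κ : σ → ℕ) :
    (MvPolynomial σ R ⧸ boxIdeal R κ) ≃ₗ[R]
      restrictSupport R {d : σ →₀ ℕ | ∀ i, d i < κ i} :=
  (Ideal.quotientEquivAlgOfEq R (boxIdeal_eq_span_monomial_image κ)).toLinearEquiv ≪≫ₗ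
    quotientSpanMonomialEquiv _ ≪≫ₗ
    LinearEquiv.ofEq _ _ (by congr 1; ext d; exact notMem_upperClosure_range_single_iff κ d)

theorem quotientBoxIdealEquiv_symm_apply (κ : σ → ℕ)
    (w : restrictSupport R {d : σ →₀ ℕ | ∀ i, d i < κ i}) :
    (quotientBoxIdealEquiv κ).symm w =
      Ideal.Quotient.mk (boxIdeal R κ) (w : MvPolynomial σ R) := by
  simp [quotientBoxIdealEquiv, quotientSpanMonomialEquiv_symm_apply,
    Ideal.quotientEquivAlgOfEq_symm]

theorem coeff_quotientBoxIdealEquiv_mk (κ : σ → ℕ) (p : MvPolynomial σ R) {d : σ →₀ ℕ}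
    (hd : ∀ i, d i < κ i) :
    coeff d (quotientBoxIdealEquiv κ (Ideal.Quotient.mk (boxIdeal R κ) p) : MvPolynomial σ R) =
      coeff d p := by
  rw [quotientBoxIdealEquiv, LinearEquiv.trans_apply, LinearEquiv.trans_apply,
    LinearEquiv.coe_ofEq_apply, AlgEquiv.toLinearEquiv_apply, Ideal.quotientEquivAlgOfEq_mk]
  exact coeff_quotientSpanMonomialEquiv_mk _ p ((notMem_upperClosure_range_single_iff κ d).2 hd)

noncomputable def boxExponentsEquivPi [Finite σ] (κ : σ → ℕ) :
    {d : σ →₀ ℕ | ∀ i, d i < κ i} ≃ ((i : σ) → Fin (κ i)) :=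
  (Finsupp.equivFunOnFinite.subtypeEquiv fun _ => Iff.rfl).trans
    (Equiv.subtypePiEquivPi.trans (Equiv.piCongrRight fun _ => Fin.equivSubtype.symm))

theorem natCard_quotient_boxIdeal [Fintype σ] (κ : σ → ℕ) :
    Nat.card (MvPolynomial σ R ⧸ boxIdeal R κ) = Nat.card R ^ ∏ i, κ i := by
  have : Finite {d : σ →₀ ℕ | ∀ i, d i < κ i} := .of_equiv _ (boxExponentsEquivPi κ).symm
  rw [Nat.card_congr (quotientBoxIdealEquiv κ).toEquiv,
    Nat.card_congr (basisRestrictSupport R _).equivFun.toEquiv, Nat.card_fun,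
    Nat.card_congr (boxExponentsEquivPi κ), Nat.card_pi]
  simp

section Socle

variable [Finite σ]

noncomputable def boxTopExponent (κ : σ → ℕ) : σ →₀ ℕ :=
  Finsupp.equivFunOnFinite.symm fun i => κ i - 1

@[simp]
theorem boxTopExponent_apply (κ : σ → ℕ) (i : σ) : boxTopExponent κ i = κ i - 1 :=
  rfl

variable (R) in
noncomputable def boxTopCoeff (κ : σ → ℕ) : (MvPolynomial σ R ⧸ boxIdeal R κ) →ₗ[R] R :=
  lcoeff R (boxTopExponent κ) ∘ₗ Submodule.subtype _ ∘ₗ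
    (quotientBoxIdealEquiv κ).toLinearMap

theorem eq_zero_of_forall_boxTopCoeff_mul_eq_zero {κ : σ → ℕ}
    (x : MvPolynomial σ R ⧸ boxIdeal R κ) (hx : ∀ r, boxTopCoeff R κ (x * r) = 0) :
    x = 0 := by
  set w := quotientBoxIdealEquiv κ x
  have hxw : x = Ideal.Quotient.mk (boxIdeal R κ) (w : MvPolynomial σ R) := by
    rw [← quotientBoxIdealEquiv_symm_apply, LinearEquiv.symm_apply_apply]
  by_contra hx0
  obtain ⟨d, hd⟩ : (w : MvPolynomial σ R).support.Nonempty := by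
    rw [Finset.nonempty_iff_ne_empty, Ne, support_eq_empty, ZeroMemClass.coe_eq_zero,
      LinearEquiv.map_eq_zero_iff]
    exact hx0
  have hdκ : ∀ i, d i < κ i := w.2 hd
  have hdτ : d ≤ boxTopExponent κ := fun i => by
    rw [boxTopExponent_apply]; have := hdκ i; omega
  have hτ : ∀ i, boxTopExponent κ i < κ i := fun i => by
    rw [boxTopExponent_apply]; have := hdκ i; omega
  -- Multiplying by `X ^ (τ - d)` moves the nonzero coefficient of `X ^ d` to the top degree `τ`.
  have key := hx (Ideal.Quotient.mk _ (monomial (boxTopExponent κ - d) 1))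
  rw [hxw, ← map_mul, boxTopCoeff, LinearMap.comp_apply, LinearMap.comp_apply,
    LinearEquiv.coe_coe, Submodule.subtype_apply, lcoeff_apply,
    coeff_quotientBoxIdealEquiv_mk _ _ hτ, coeff_mul_monomial', if_pos tsub_le_self,
    tsub_tsub_cancel_of_le hdτ, mul_one] at key
  exact mem_support_iff.1 hd key

end Socle

end MvPolynomial

theorem span_X_pow_pair_eq_boxIdeal (k m : ℕ) :
    Ideal.span {(X 0 : MvPolynomial (Fin 2) (ZMod 2)) ^ k, X 1 ^ m} =
      boxIdeal (ZMod 2) ![k, m] := by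
  rw [boxIdeal]
  congr 1
  ext p
  simp [Fin.exists_fin_two, eq_comm]

theorem natCard_Rkm (k m : ℕ) : Nat.card (Rkm k m) = 2 ^ (k * m) := by
  unfold Rkm
  rw [span_X_pow_pair_eq_boxIdeal, natCard_quotient_boxIdeal]
  simp

theorem exists_separating_linearForm_Rkm (k m : ℕ) :
    ∃ φ : Rkm k m →ₗ[ZMod 2] ZMod 2, ∀ x, (∀ r, φ (x * r) = 0) → x = 0 := by
  unfold Rkm
  rw [span_X_pow_pair_eq_boxIdeal]
  exact ⟨boxTopCoeff _ _, eq_zero_of_forall_boxTopCoeff_mul_eq_zero⟩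

theorem Rkm_card_mul_card_dual_general (k m n : ℕ)
    (C : Submodule (Rkm k m) (Fin n → Rkm k m)) :
    Nat.card C *
      Nat.card {b : Fin n → Rkm k m | ∀ a ∈ C, ∑ i, a i * b i = 0} = 2 ^ (k * m * n) ∧
    Nat.card C *
      Nat.card {b : Fin n → Rkm k m | ∀ a ∈ C, ∑ i, a i * b i = 0} =
        Nat.card (Rkm k m) ^ n := by
  have : Finite (Rkm k m) := Nat.finite_of_card_ne_zero (by simp [natCard_Rkm])
  obtain ⟨φ, hφ⟩ := exists_separating_linearForm_Rkm k m
  have hdual := card_mul_card_dotProduct_orthogonal hφ C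
  rw [Fintype.card_fin] at hdual
  exact ⟨by rw [hdual, natCard_Rkm, ← pow_mul], hdual⟩

/-- For any linear code `C` of length `n` over `R_{k,m}` (an `R_{k,m}`-submodule of
`R_{k,m}^n`), one has `|C| · |C^⊥| = |R_{k,m}|^n = 2^{kmn}`. -/
theorem Rkm_card_mul_card_dual (k m n : ℕ) (hk : 1 ≤ k) (hm : 1 ≤ m) (hn : 1 ≤ n)
    (C : Submodule (Rkm k m) (Fin n → Rkm k m)) :
    Nat.card C *
      Nat.card {b : Fin n → Rkm k m | ∀ a ∈ C, ∑ i, a i * b i = 0} = 2 ^ (k * m * n) ∧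
    Nat.card C *
      Nat.card {b : Fin n → Rkm k m | ∀ a ∈ C, ∑ i, a i * b i = 0} =
        Nat.card (Rkm k m) ^ n :=
  Rkm_card_mul_card_dual_general k m n C
end

section
/- Let k ≥ 1 and n ≥ 1 be integers and let C be a linear code of length n over R_{k,1}. Then φ_{k1}(C^⊥) = φ_{k1}(C)^⊥, where the dual on the right is taken in F_2^{kn} with the standard dot product. In particular, if C is self-dual over R_{k,1}, then φ_{k1}(C) is a binary self-dual code of length kn. -/
set_option synthInstance.maxHeartbeats 1000000
set_option maxHeartbeats 1000000

/-- The ring `R_{k,1} = F_2[u]/⟨u^k⟩`. -/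
noncomputable abbrev Rk1 (k : ℕ) : Type :=
  Polynomial (ZMod 2) ⧸ (Ideal.span {(Polynomial.X : Polynomial (ZMod 2)) ^ k})

/-- `u`, the image of `X` in `R_{k,1}`. -/
noncomputable def Rk1.u (k : ℕ) : Rk1 k := Ideal.Quotient.mk _ Polynomial.X

/-- The `t`-th Gray interval (0-indexed): `I_{2s+1} = {s,…,k-1-s}` and
`I_{2s+2} = {s+1,…,k-1-s}`, i.e. `I_{t+1} = {⌈(t+1)/2⌉,…,k-1-⌊t/2⌋}` for `t = 0,…,k-1`. -/
def grayInterval (k : ℕ) (t : Fin k) : Finset (Fin k) :=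
  Finset.univ.filter fun i : Fin k => ((t : ℕ) + 1) / 2 ≤ (i : ℕ) ∧ (i : ℕ) ≤ k - 1 - (t : ℕ) / 2

/-!
Let `ε : R_{k,1} → F_2` be the sum of the coordinates in the basis `1, u, …, u^{k-1}`, so
`ε(u^m) = 1` iff `m < k`. The index `i` lies in `I_{t+1}` iff `t ≤ d(i) := min(2i, 2(k-1-i)+1)`,
so `i` and `i'` share exactly `min(d(i), d(i')) + 1` Gray intervals, an odd number iff
`i + i' < k`. Hence `φ_{k1}(a) · φ_{k1}(b) = ε(a · b)`. The functional `ε` is nondegenerate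
(`ε(u^{k-1-m} c)` is the lowest nonzero coefficient `c_m` of `c`), and `φ_{k1}` is bijective since
`d` is injective and makes its matrix triangular. These two facts turn `φ_{k1}(C^⊥) ⊆ φ_{k1}(C)^⊥`
into an equality.
-/

open Finset Matrix

section GrayIntervals

def grayDepth (k i : ℕ) : ℕ := min (2 * i) (2 * (k - 1 - i) + 1)

variable {k : ℕ}

theorem mem_grayInterval_iff (t i : Fin k) : i ∈ grayInterval k t ↔ (t : ℕ) ≤ grayDepth k i := by
  simp only [grayInterval, mem_filter, mem_univ, true_and, grayDepth]
  omega

theorem grayDepth_lt (i : Fin k) : grayDepth k i < k := by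
  simp only [grayDepth]
  omega

theorem grayDepth_injective : Function.Injective fun i : Fin k => grayDepth k i := by
  intro i i' h
  simp only [grayDepth] at h
  omega

theorem card_filter_mem_grayInterval (i i' : Fin k) :
    #{t | i ∈ grayInterval k t ∧ i' ∈ grayInterval k t} =
      min (grayDepth k i) (grayDepth k i') + 1 := by
  have hlt : min (grayDepth k i) (grayDepth k i') < k := (min_le_left _ _).trans_lt (grayDepth_lt i)
  simp_rw [mem_grayInterval_iff, ← le_min_iff]
  rw [← Fin.card_Iic ⟨_, hlt⟩]
  congr 1
  ext t
  simp [Fin.le_def]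

/-- The minimum is even iff it is `2i` or `2i'`, i.e. iff `min i i' ≤ k - 1 - max i i'`. -/
theorem even_min_grayDepth_iff (i i' : Fin k) :
    Even (min (grayDepth k i) (grayDepth k i')) ↔ (i : ℕ) + i' < k := by
  simp only [Nat.even_iff, grayDepth]
  omega

end GrayIntervals

section GrayMatrix

variable (F : Type*) (k : ℕ)

def grayMatrix [Zero F] [One F] : Matrix (Fin k) (Fin k) F :=
  Matrix.of fun t i => if i ∈ grayInterval k t then 1 else 0

def antitriangularOnes [Zero F] [One F] : Matrix (Fin k) (Fin k) F :=
  Matrix.of fun i j => if (i : ℕ) + j < k then 1 else 0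

variable {F k}

theorem grayMatrix_mulVec_apply [NonAssocSemiring F] (c : Fin k → F) (t : Fin k) :
    (grayMatrix F k *ᵥ c) t = ∑ i ∈ grayInterval k t, c i := by
  simp [grayMatrix, mulVec, dotProduct, ite_mul, sum_ite_mem]

theorem grayMatrix_transpose_mul_self [Ring F] [CharP F 2] :
    (grayMatrix F k)ᵀ * grayMatrix F k = antitriangularOnes F k := by
  ext i i'
  simp only [mul_apply, transpose_apply, grayMatrix, antitriangularOnes, of_apply,
    ite_zero_mul_ite_zero, mul_one, sum_boole, card_filter_mem_grayInterval,
    CharTwo.natCast_eq_ite, Nat.even_add_one, even_min_grayDepth_iff]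
  split_ifs <;> rfl

theorem grayMatrix_mulVec_injective [Ring F] : Function.Injective (grayMatrix F k).mulVec := by
  intro a b hab
  set c := a - b
  have hc : grayMatrix F k *ᵥ c = 0 := by rw [mulVec_sub, hab, sub_self]
  have row (t : Fin k) : ∑ i ∈ grayInterval k t, c i = 0 := by
    rw [← grayMatrix_mulVec_apply, hc, Pi.zero_apply]
  -- downward induction on `grayDepth k i`; the row `grayDepth k i` isolates `c i`
  have key (d : ℕ) : ∀ i : Fin k, k ≤ grayDepth k i + d → c i = 0 := by
    induction d with
    | zero => exact fun i hi => absurd (grayDepth_lt i) (by omega)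
    | succ d ih =>
      intro i hi
      rw [← row ⟨grayDepth k i, grayDepth_lt i⟩,
        sum_eq_single_of_mem i ((mem_grayInterval_iff _ _).mpr le_rfl)]
      intro i' hi' hne
      have : grayDepth k i' ≠ grayDepth k i := fun h => hne (grayDepth_injective h)
      rw [mem_grayInterval_iff, Fin.val_mk] at hi'
      exact ih i' (by omega)
  exact sub_eq_zero.mp (funext fun i => key k i (by omega))

theorem grayMatrix_mulVec_surjective [Field F] : Function.Surjective (grayMatrix F k).mulVec :=
  mulVec_surjective_iff_isUnit.mpr (mulVec_injective_iff_isUnit.mp grayMatrix_mulVec_injective)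

theorem grayMatrix_mulVec_dotProduct [CommRing F] [CharP F 2] (x y : Fin k → F) :
    (grayMatrix F k *ᵥ x) ⬝ᵥ (grayMatrix F k *ᵥ y) = x ⬝ᵥ (antitriangularOnes F k *ᵥ y) := by
  rw [dotProduct_mulVec, ← vecMul_transpose, vecMul_vecMul, ← dotProduct_mulVec,
    grayMatrix_transpose_mul_self]

end GrayMatrix

section TruncatedPolynomialAlgebra

variable {F R : Type*} [CommRing F] [CommRing R] [Algebra F R] {k : ℕ} {u : R}
  (B : Module.Basis (Fin k) F R)

theorem sumCoords_pow (hB : ∀ i : Fin k, B i = u ^ (i : ℕ)) (hu : u ^ k = 0) (m : ℕ) :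
    B.sumCoords (u ^ m) = if m < k then 1 else 0 := by
  split_ifs with hm
  · rw [← hB ⟨m, hm⟩, Module.Basis.sumCoords_self_apply]
  · rw [← Nat.add_sub_of_le (not_lt.mp hm), pow_add, hu, zero_mul, map_zero]

theorem sumCoords_mul (hB : ∀ i : Fin k, B i = u ^ (i : ℕ)) (hu : u ^ k = 0) (x y : R) :
    B.sumCoords (x * y) = B.equivFun x ⬝ᵥ (antitriangularOnes F k *ᵥ B.equivFun y) := by
  conv_lhs => rw [← B.sum_equivFun x, ← B.sum_equivFun y]
  simp_rw [sum_mul_sum, map_sum, hB, smul_mul_smul_comm, ← pow_add, map_smul,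
    sumCoords_pow B hB hu, smul_eq_mul, dotProduct, mulVec, dotProduct, antitriangularOnes, of_apply,
    mul_sum]
  refine sum_congr rfl fun i _ => sum_congr rfl fun j _ => ?_
  ring

theorem eq_zero_of_forall_sumCoords_mul_eq_zero (hB : ∀ i : Fin k, B i = u ^ (i : ℕ))
    (hu : u ^ k = 0) (c : R) (hc : ∀ r, B.sumCoords (r * c) = 0) : c = 0 := by
  by_contra hne
  obtain ⟨i, hi⟩ : ∃ i, B.equivFun c i ≠ 0 := by
    by_contra! h
    exact hne (B.equivFun.map_eq_zero_iff.mp (funext h))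
  obtain ⟨m, hm, hmin⟩ := wellFounded_lt.has_min {i | B.equivFun c i ≠ 0} ⟨i, hi⟩
  -- `u ^ (k - 1 - m) * c` truncates `c` to its lowest coefficient, moved to `u ^ (k - 1)`
  have hlow := hc (B ⟨k - 1 - m, by omega⟩)
  rw [sumCoords_mul B hB hu, B.equivFun_apply (B _), B.repr_self, Finsupp.single_eq_pi_single,
    single_one_dotProduct, mulVec, dotProduct, sum_eq_single m] at hlow
  · rw [antitriangularOnes, of_apply, if_pos (by rw [Fin.val_mk]; omega), one_mul] at hlow
    exact hm hlow
  · intro j _ hjm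
    rcases lt_or_gt_of_ne hjm with hjm | hjm
    · rw [not_not.mp fun hj => hmin j hj hjm, mul_zero]
    · rw [antitriangularOnes, of_apply, if_neg (by rw [Fin.val_mk]; omega), zero_mul]
  · exact absurd (mem_univ m)

end TruncatedPolynomialAlgebra

theorem image_dual_eq_dual_image {R F ι κ : Type*} [CommRing R] [CommRing F] [Fintype ι]
    [Fintype κ] (ε : R →+ F) (hε : ∀ c, (∀ r, ε (r * c) = 0) → c = 0)
    (ψ : (ι → R) → κ → F) (hψ : Function.Surjective ψ)
    (hdot : ∀ a b, ψ a ⬝ᵥ ψ b = ε (a ⬝ᵥ b)) (C : Submodule R (ι → R)) :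
    ψ '' {b | ∀ a ∈ C, a ⬝ᵥ b = 0} = {w | ∀ x ∈ ψ '' C, x ⬝ᵥ w = 0} := by
  ext w
  constructor
  · rintro ⟨b, hb, rfl⟩ _ ⟨a, ha, rfl⟩
    rw [hdot, hb a ha, map_zero]
  · intro hw
    obtain ⟨b, rfl⟩ := hψ w
    refine ⟨b, fun a ha => hε _ fun r => ?_, rfl⟩
    rw [← hw _ ⟨r • a, C.smul_mem r ha, rfl⟩, hdot, smul_dotProduct, smul_eq_mul]

theorem Rk1.u_pow_self (k : ℕ) : Rk1.u k ^ k = 0 := by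
  rw [Rk1.u, ← map_pow, Ideal.Quotient.eq_zero_iff_mem]
  exact Ideal.subset_span rfl

section GrayMap

variable {F R : Type*} [Field F] [CommRing R] [Algebra F R] {k n : ℕ}

/-- The Gray map `φ_{k1}`, read off the coordinates in the basis `B`. -/
noncomputable def grayMap (B : Module.Basis (Fin k) F R) (a : Fin n → R) : Fin k × Fin n → F :=
  fun p => (grayMatrix F k *ᵥ B.equivFun (a p.2)) p.1

theorem grayMap_surjective (B : Module.Basis (Fin k) F R) :
    Function.Surjective (grayMap (n := n) B) := by
  intro w
  choose x hx using fun j : Fin n => grayMatrix_mulVec_surjective fun t => w (t, j)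
  exact ⟨fun j => B.equivFun.symm (x j), funext fun p => by
    rw [grayMap, LinearEquiv.apply_symm_apply, hx]⟩

theorem grayMap_dotProduct [CharP F 2] {u : R} (B : Module.Basis (Fin k) F R)
    (hB : ∀ i : Fin k, B i = u ^ (i : ℕ)) (hu : u ^ k = 0) (a b : Fin n → R) :
    grayMap B a ⬝ᵥ grayMap B b = B.sumCoords (a ⬝ᵥ b) := by
  rw [dotProduct, Fintype.sum_prod_type_right, dotProduct, map_sum]
  refine sum_congr rfl fun j _ => ?_
  rw [sumCoords_mul B hB hu, ← grayMatrix_mulVec_dotProduct]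
  rfl

end GrayMap

theorem grayMap_dual_Rk1_general (k n : ℕ)
    (B : Module.Basis (Fin k) (ZMod 2) (Rk1 k)) (hB : ∀ i : Fin k, B i = Rk1.u k ^ (i : ℕ))
    (φ : (Fin n → Rk1 k) → (Fin k × Fin n → ZMod 2))
    (hφ : ∀ a : Fin n → Rk1 k, ∀ p : Fin k × Fin n,
      φ a p = ∑ i ∈ grayInterval k p.1, B.repr (a p.2) i)
    (C : Submodule (Rk1 k) (Fin n → Rk1 k)) :
    φ '' {b : Fin n → Rk1 k | ∀ a ∈ C, ∑ j, a j * b j = 0} =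
      {w : Fin k × Fin n → ZMod 2 | ∀ x ∈ φ '' (C : Set (Fin n → Rk1 k)), ∑ p, x p * w p = 0} ∧
    ((C : Set (Fin n → Rk1 k)) = {b : Fin n → Rk1 k | ∀ a ∈ C, ∑ j, a j * b j = 0} →
      φ '' (C : Set (Fin n → Rk1 k)) =
        {w : Fin k × Fin n → ZMod 2 |
          ∀ x ∈ φ '' (C : Set (Fin n → Rk1 k)), ∑ p, x p * w p = 0}) := by
  obtain rfl : φ = grayMap B := funext fun a => funext fun p => by
    rw [hφ, grayMap, grayMatrix_mulVec_apply, B.equivFun_apply]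
  have hdual := image_dual_eq_dual_image B.sumCoords.toAddMonoidHom
    (eq_zero_of_forall_sumCoords_mul_eq_zero B hB (Rk1.u_pow_self k)) _ (grayMap_surjective B)
    (grayMap_dotProduct B hB (Rk1.u_pow_self k)) C
  exact ⟨hdual, fun hC => (congrArg _ hC).trans hdual⟩

/-- The Gray map `φ_{k1}` preserves duality: `φ_{k1}(C^⊥) = φ_{k1}(C)^⊥`, so in particular
the Gray image of a self-dual code of length `n` over `R_{k,1}` is a binary self-dual code
of length `kn`.  Here the coefficients `ā_i ∈ F_2^n` of `ā ∈ R_{k,1}^n` are taken with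
respect to the basis `1, u, …, u^{k-1}`, and the blocks of `φ_{k1}` are indexed by
`Fin k`. -/
theorem grayMap_dual_Rk1 (k n : ℕ) (hk : 1 ≤ k) (hn : 1 ≤ n)
    (B : Module.Basis (Fin k) (ZMod 2) (Rk1 k)) (hB : ∀ i : Fin k, B i = Rk1.u k ^ (i : ℕ))
    (φ : (Fin n → Rk1 k) → (Fin k × Fin n → ZMod 2))
    (hφ : ∀ a : Fin n → Rk1 k, ∀ p : Fin k × Fin n,
      φ a p = ∑ i ∈ grayInterval k p.1, B.repr (a p.2) i)
    (C : Submodule (Rk1 k) (Fin n → Rk1 k)) :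
    φ '' {b : Fin n → Rk1 k | ∀ a ∈ C, ∑ j, a j * b j = 0} =
      {w : Fin k × Fin n → ZMod 2 | ∀ x ∈ φ '' (C : Set (Fin n → Rk1 k)), ∑ p, x p * w p = 0} ∧
    ((C : Set (Fin n → Rk1 k)) = {b : Fin n → Rk1 k | ∀ a ∈ C, ∑ j, a j * b j = 0} →
      φ '' (C : Set (Fin n → Rk1 k)) =
        {w : Fin k × Fin n → ZMod 2 |
          ∀ x ∈ φ '' (C : Set (Fin n → Rk1 k)), ∑ p, x p * w p = 0}) :=
  grayMap_dual_Rk1_general k n B hB φ hφ C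
end

section
/- Let k ≥ 1, m ≥ 1 and n ≥ 1 be integers and let C be a linear code of length n over R_{k,m}. Then for all real numbers x and y, |C| · Σ_{b ∈ C^⊥} x^{n - w_H(b)} y^{w_H(b)} = Σ_{c ∈ C} (x + (2^{km} - 1)·y)^{n - w_H(c)} · (x - y)^{w_H(c)}, where w_H(a) denotes the number of nonzero coordinates of a vector a ∈ R_{k,m}^n (MacWilliams identity for Hamming weight enumerators over R_{k,m}). -/
open MvPolynomial

set_option synthInstance.maxHeartbeats 1000000
set_option maxHeartbeats 1000000

/-- The Hamming weight of a vector over `R_{k,m}`: the number of nonzero coordinates. -/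
noncomputable def hWt {k m n : ℕ} (a : Fin n → Rkm k m) : ℕ :=
  Nat.card {i : Fin n // a i ≠ 0}

/-! The socle coefficient of `R_{k,m}` (the coefficient of `u^{k-1} v^{m-1}` in the basis of
standard monomials), read as a sign, is an additive character `ψ` all of whose shifts
`r ↦ ψ (a * r)`, `a ≠ 0`, are nontrivial: if `u^i v^j` occurs in `a`, then `u^{k-1-i} v^{m-1-j} a`
has socle coefficient `1`. For such a primitive character, summing `ψ ⟨c, b⟩` over `c ∈ C` gives
`|C|` on `C^⊥` and `0` off it, while summing it over all `b` against `∏ᵢ (if bᵢ = 0 then x else y)`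
factorizes over the coordinates, each factor being `x + (|R| - 1) y` or `x - y`. -/

open Finset

namespace AddChar

lemma map_sum_eq_prod {A M ι : Type*} [AddCommMonoid A] [CommMonoid M] (ψ : AddChar A M)
    (s : Finset ι) (f : ι → A) : ψ (∑ i ∈ s, f i) = ∏ i ∈ s, ψ (f i) := by
  classical
  induction s using Finset.induction_on with
  | empty => simp
  | insert i s hi ih => rw [sum_insert hi, prod_insert hi, map_add_eq_mul, ih]

lemma isPrimitive_compAddMonoidHom {R A M : Type*} [CommRing R] [AddCommMonoid A] [CommMonoid M]
    {φ : AddChar A M} (hφ : ∀ c, φ c = 1 → c = 0) (f : R →+ A)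
    (hf : ∀ a ≠ 0, ∃ t, f (a * t) ≠ 0) : (φ.compAddMonoidHom f).IsPrimitive := by
  intro a ha h
  obtain ⟨t, ht⟩ := hf a ha
  exact ht (hφ _ (by simpa using DFunLike.congr_fun h t))

variable {R K : Type*} [CommRing R] [Fintype R] [DecidableEq R] [CommRing K] [IsDomain K]
  {ψ : AddChar R K}

lemma sum_mulShift_mul_ite (hψ : ψ.IsPrimitive) (a : R) (x y : K) :
    ∑ r, ψ (a * r) * (if r = 0 then x else y) =
      if a = 0 then x + (Fintype.card R - 1) * y else x - y := by
  have hsplit (r : R) : (if r = 0 then x else y) = y + if r = 0 then x - y else 0 := by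
    split_ifs <;> ring
  simp_rw [hsplit, mul_add, sum_add_distrib, ← sum_mul, mul_ite, mul_zero, sum_ite_eq',
    mem_univ, if_true, mul_zero, map_zero_eq_one, one_mul, mul_comm a, sum_mulShift a hψ]
  split_ifs <;> ring

lemma sum_dotProduct_mul_prod_ite {ι : Type*} [Fintype ι] [DecidableEq ι]
    (hψ : ψ.IsPrimitive) (a : ι → R) (x y : K) :
    ∑ b : ι → R, ψ (a ⬝ᵥ b) * ∏ i, (if b i = 0 then x else y) =
      ∏ i, if a i = 0 then x + (Fintype.card R - 1) * y else x - y := by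
  simp_rw [dotProduct, map_sum_eq_prod, ← prod_mul_distrib, ← sum_mulShift_mul_ite hψ]
  exact (Fintype.prod_sum fun i r => ψ (a i * r) * if r = 0 then x else y).symm

lemma sum_submodule_dotProduct_eq_indicator {ι : Type*} [Fintype ι] (hψ : ψ.IsPrimitive)
    (C : Submodule R (ι → R)) [Fintype C] (b : ι → R) :
    ∑ c : C, ψ ((c : ι → R) ⬝ᵥ b) =
      {b | ∀ a ∈ C, a ⬝ᵥ b = 0}.indicator (fun _ => (Nat.card C : K)) b := by
  by_cases hb : b ∈ {b : ι → R | ∀ a ∈ C, a ⬝ᵥ b = 0}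
  · rw [Set.indicator_of_mem hb]
    simp [show ∀ c : C, (c : ι → R) ⬝ᵥ b = 0 from fun c => hb c c.2]
  · rw [Set.indicator_of_notMem hb]
    simp only [Set.mem_ofPred, not_forall] at hb
    obtain ⟨a, ha, hab⟩ := hb
    obtain ⟨r, hr⟩ := ne_one_iff.1 (hψ hab)
    let φ : AddChar C K := ψ.compAddMonoidHom
      (AddMonoidHom.mk' (fun c : C => (c : ι → R) ⬝ᵥ b) fun c c' => add_dotProduct _ _ _)
    refine sum_eq_zero_of_ne_one (ψ := φ) (ne_one_iff.2 ⟨⟨r • a, C.smul_mem r ha⟩, ?_⟩)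
    simpa [φ, smul_dotProduct, mul_comm r] using hr

lemma prod_ite_eq_pow_hammingNorm {ι β M : Type*} [Fintype ι] [Zero β] [DecidableEq β]
    [CommMonoid M] (b : ι → β) (x y : M) :
    ∏ i, (if b i = 0 then x else y) = x ^ (Fintype.card ι - hammingNorm b) * y ^ hammingNorm b := by
  rw [prod_ite, prod_const, prod_const, hammingNorm, ← card_univ,
    ← card_filter_add_card_filter_not (s := univ) (fun i => b i = 0)]
  simp

theorem macWilliams_of_isPrimitive {ι : Type*} [Fintype ι] [DecidableEq ι] (hψ : ψ.IsPrimitive)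
    (C : Submodule R (ι → R)) (x y : K) :
    (Nat.card C : K) * ∑ᶠ b ∈ {b : ι → R | ∀ a ∈ C, a ⬝ᵥ b = 0},
        x ^ (Fintype.card ι - hammingNorm b) * y ^ hammingNorm b =
      ∑ᶠ c ∈ (C : Set (ι → R)), (x + (Fintype.card R - 1) * y) ^ (Fintype.card ι - hammingNorm c) *
        (x - y) ^ hammingNorm c := by
  classical
  rw [finsum_mem_def, ← finsum_set_coe_eq_finsum_mem, finsum_eq_sum_of_fintype,
    finsum_eq_sum_of_fintype, mul_sum]
  simp_rw [← prod_ite_eq_pow_hammingNorm]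
  calc _ = ∑ b : ι → R, (∑ c : C, ψ ((c : ι → R) ⬝ᵥ b)) * ∏ i, (if b i = 0 then x else y) := by
        refine sum_congr rfl fun b _ => ?_
        rw [sum_submodule_dotProduct_eq_indicator hψ, Set.indicator_apply, Set.indicator_apply]
        split_ifs <;> simp
    _ = ∑ c : C, ∑ b : ι → R, ψ ((c : ι → R) ⬝ᵥ b) * ∏ i, (if b i = 0 then x else y) := by
        simp_rw [sum_mul]; exact sum_comm
    _ = _ := by simp_rw [sum_dotProduct_mul_prod_ite hψ]; rfl

end AddChar

namespace Rkm

/-- The exponent of the monomial `u^i v^j`, where `u = X 0` and `v = X 1`. -/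
noncomputable def exponent (i j : ℕ) : Fin 2 →₀ ℕ := Finsupp.single 0 i + Finsupp.single 1 j

@[simp] lemma exponent_apply_zero (i j : ℕ) : exponent i j 0 = i := by simp [exponent]
@[simp] lemma exponent_apply_one (i j : ℕ) : exponent i j 1 = j := by simp [exponent]

lemma exponent_add (i j i' j' : ℕ) :
    exponent i j + exponent i' j' = exponent (i + i') (j + j') := by
  ext a; fin_cases a <;> simp

lemma exponent_inj {i j i' j' : ℕ} : exponent i j = exponent i' j' ↔ i = i' ∧ j = j' := by
  refine ⟨fun h => ⟨by simpa using congr($h 0), by simpa using congr($h 1)⟩, ?_⟩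
  rintro ⟨rfl, rfl⟩
  rfl

lemma eq_exponent (d : Fin 2 →₀ ℕ) : d = exponent (d 0) (d 1) := by
  ext a; fin_cases a <;> simp

noncomputable def coeffs (k m : ℕ) :
    MvPolynomial (Fin 2) (ZMod 2) →ₗ[ZMod 2] (Fin k × Fin m → ZMod 2) :=
  LinearMap.pi fun q => lcoeff (ZMod 2) (exponent q.1 q.2)

lemma coeffs_apply (k m : ℕ) (p : MvPolynomial (Fin 2) (ZMod 2)) (q : Fin k × Fin m) :
    coeffs k m p q = coeff (exponent q.1 q.2) p := rfl

lemma mem_ideal_iff {k m : ℕ} {p : MvPolynomial (Fin 2) (ZMod 2)} :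
    p ∈ Ideal.span {(X 0 : MvPolynomial (Fin 2) (ZMod 2)) ^ k, X 1 ^ m} ↔ coeffs k m p = 0 := by
  have hI : ({X 0 ^ k, X 1 ^ m} : Set (MvPolynomial (Fin 2) (ZMod 2))) =
      (fun s => monomial s 1) '' {Finsupp.single 0 k, Finsupp.single 1 m} := by
    simp [Set.image_pair, X_pow_eq_monomial]
  simp only [hI, mem_ideal_span_monomial_image, Set.mem_insert_iff, Set.mem_singleton_iff,
    exists_eq_or_imp, exists_eq_left, Finsupp.single_le_iff, mem_support_iff, funext_iff,
    coeffs_apply, Pi.zero_apply, Prod.forall]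
  constructor
  · intro h i j
    by_contra hc
    have := h _ hc
    rw [exponent_apply_zero, exponent_apply_one] at this
    omega
  · intro h d hd
    by_contra hc
    push Not at hc
    rw [eq_exponent d] at hd
    exact hd (h ⟨d 0, hc.1⟩ ⟨d 1, hc.2⟩)

lemma coeffs_surjective (k m : ℕ) : Function.Surjective (coeffs k m) := by
  intro f
  refine ⟨∑ q : Fin k × Fin m, monomial (exponent q.1 q.2) (f q), funext fun q => ?_⟩
  simp [coeffs_apply, coeff_sum, coeff_monomial, exponent_inj, ← Fin.ext_iff, ← Prod.ext_iff]

noncomputable def linearEquiv (k m : ℕ) : Rkm k m ≃ₗ[ZMod 2] (Fin k × Fin m → ZMod 2) :=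
  (Submodule.Quotient.restrictScalarsEquiv (ZMod 2) _).symm ≪≫ₗ
    Submodule.quotEquivOfEq _ _ (by ext p; exact mem_ideal_iff) ≪≫ₗ
    (coeffs k m).quotKerEquivOfSurjective (coeffs_surjective k m)

noncomputable instance (k m : ℕ) : Fintype (Rkm k m) :=
  Fintype.ofEquiv _ (linearEquiv k m).symm.toEquiv

lemma card_eq_two_pow (k m : ℕ) : Fintype.card (Rkm k m) = 2 ^ (k * m) := by
  simp [Fintype.card_congr (linearEquiv k m).toEquiv, ZMod.card]

variable {k m : ℕ} (hk : 1 ≤ k) (hm : 1 ≤ m)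

noncomputable def socleCoeff : Rkm k m →ₗ[ZMod 2] ZMod 2 :=
  (LinearMap.proj (⟨k - 1, by omega⟩, ⟨m - 1, by omega⟩)).comp (linearEquiv k m).toLinearMap

lemma socleCoeff_mk (p : MvPolynomial (Fin 2) (ZMod 2)) :
    socleCoeff hk hm (Ideal.Quotient.mk _ p) = coeff (exponent (k - 1) (m - 1)) p := rfl

lemma exists_socleCoeff_mul_ne_zero {a : Rkm k m} (ha : a ≠ 0) :
    ∃ t, socleCoeff hk hm (a * t) ≠ 0 := by
  obtain ⟨p, rfl⟩ := Ideal.Quotient.mk_surjective a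
  have hp : coeffs k m p ≠ 0 := fun h => ha (Ideal.Quotient.eq_zero_iff_mem.2 (mem_ideal_iff.2 h))
  obtain ⟨⟨i, j⟩, hij⟩ := Function.ne_iff.1 hp
  refine ⟨Ideal.Quotient.mk _ (monomial (exponent (k - 1 - i) (m - 1 - j)) 1), ?_⟩
  have hexp : exponent (k - 1) (m - 1) = exponent i j + exponent (k - 1 - i) (m - 1 - j) := by
    rw [exponent_add, exponent_inj]
    omega
  rwa [← map_mul, socleCoeff_mk, hexp, coeff_mul_monomial, mul_one]

noncomputable def generatingChar : AddChar (Rkm k m) ℝ :=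
  (AddChar.zmodChar 2 (ζ := (-1 : ℝ)) (by norm_num)).compAddMonoidHom
    (socleCoeff hk hm).toAddMonoidHom

lemma isPrimitive_generatingChar : (generatingChar hk hm).IsPrimitive := by
  refine AddChar.isPrimitive_compAddMonoidHom (fun c hc => ?_) _
    fun _ => exists_socleCoeff_mul_ne_zero hk hm
  rw [AddChar.zmodChar_apply, neg_one_pow_eq_one_iff_even (by norm_num), Nat.even_iff] at hc
  rw [← ZMod.val_eq_zero]
  have := ZMod.val_lt c
  omega

lemma hWt_eq_hammingNorm [DecidableEq (Rkm k m)] {n : ℕ} (a : Fin n → Rkm k m) :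
    hWt a = hammingNorm a := by
  rw [hWt, Nat.card_eq_fintype_card, Fintype.card_subtype]
  rfl

end Rkm

theorem Rkm_macwilliams_hamming_general (k m n : ℕ) (hk : 1 ≤ k) (hm : 1 ≤ m)
    (C : Submodule (Rkm k m) (Fin n → Rkm k m)) (x y : ℝ) :
    (Nat.card C : ℝ) *
      ∑ᶠ b ∈ {b : Fin n → Rkm k m | ∀ a ∈ C, ∑ i, a i * b i = 0},
        x ^ (n - hWt b) * y ^ hWt b =
    ∑ᶠ c ∈ (C : Set (Fin n → Rkm k m)),
      (x + ((2 : ℝ) ^ (k * m) - 1) * y) ^ (n - hWt c) * (x - y) ^ hWt c := by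
  classical
  have h := AddChar.macWilliams_of_isPrimitive (Rkm.isPrimitive_generatingChar hk hm) C x y
  simp only [Fintype.card_fin, Rkm.card_eq_two_pow, ← Rkm.hWt_eq_hammingNorm] at h
  exact_mod_cast h

/-- MacWilliams identity for the Hamming weight enumerators of a linear code over `R_{k,m}`
and its dual:
`|C| · W_{C^⊥}(x,y) = W_C(x + (2^{km}-1)y, x - y)`. -/
theorem Rkm_macwilliams_hamming (k m n : ℕ) (hk : 1 ≤ k) (hm : 1 ≤ m) (hn : 1 ≤ n)
    (C : Submodule (Rkm k m) (Fin n → Rkm k m)) (x y : ℝ) :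
    (Nat.card C : ℝ) *
      ∑ᶠ b ∈ {b : Fin n → Rkm k m | ∀ a ∈ C, ∑ i, a i * b i = 0},
        x ^ (n - hWt b) * y ^ hWt b =
    ∑ᶠ c ∈ (C : Set (Fin n → Rkm k m)),
      (x + ((2 : ℝ) ^ (k * m) - 1) * y) ^ (n - hWt c) * (x - y) ^ hWt c :=
  Rkm_macwilliams_hamming_general k m n hk hm C x y
end

section
/- Let k ≥ 1, m ≥ 1 and n ≥ 1 be integers, let A be an n×n matrix over R_{k,m}, and let C ⊆ R_{k,m}^{2n} be the code generated by the rows of the block matrix [I_n | A]. If C is self-dual over R_{k,m}, then μ(C) is a binary self-dual code of length 2n (it is the binary code generated by the rows of [I_n | μ(A)]). -/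
/-! Over any commutative ring the rows of `[I | B]` are pairwise orthogonal exactly when
`B Bᵀ = -1`. Then `-Bᵀ` is a two-sided inverse of `B`, so a word `(x, y)` orthogonal to all rows,
i.e. with `x + B y = 0`, equals `x [I | B]`; hence the code generated by `[I | B]` is self-dual
iff `B Bᵀ = -1`. This condition is preserved by the ring homomorphism `μ`, which maps the code
generated by `[I | A]` onto the one generated by `[I | μ(A)]`. -/

open MvPolynomial

set_option synthInstance.maxHeartbeats 1000000
set_option maxHeartbeats 1000000

open Matrix Submodule Set

section

variable {R : Type*} [CommRing R]

def IsSelfDualCode {ι : Type*} [Fintype ι] (C : Submodule R (ι → R)) : Prop :=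
  (C : Set (ι → R)) = {b | ∀ a ∈ C, a ⬝ᵥ b = 0}

theorem forall_mem_span_range_dotProduct_eq_zero_iff {m n : Type*} [Fintype m] [Fintype n]
    (M : Matrix m n R) (b : n → R) :
    (∀ a ∈ span R (range M.row), a ⬝ᵥ b = 0) ↔ M *ᵥ b = 0 := by
  rw [← range_vecMulLinear, ← dotProduct_eq_zero_iff]
  simp only [LinearMap.mem_range, forall_exists_index, forall_apply_eq_imp_iff,
    vecMulLinear_apply, ← dotProduct_mulVec]
  exact forall_congr' fun a => by rw [dotProduct_comm]

variable {ι : Type*} [DecidableEq ι]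

theorem row_fromCols_one (B : Matrix ι ι R) :
    (fromCols (1 : Matrix ι ι R) B).row = fun i => Sum.elim (Pi.single i 1) (B i) := by
  ext i (j | j)
  · simp [one_eq_pi_single]
  · rfl

variable [Fintype ι]

theorem fromCols_one_mul_transpose (B : Matrix ι ι R) :
    fromCols (1 : Matrix ι ι R) B * (fromCols (1 : Matrix ι ι R) B)ᵀ = 1 + B * Bᵀ := by
  rw [transpose_fromCols, fromCols_mul_fromRows, transpose_one, mul_one]

theorem mem_span_range_fromCols_one_iff {B : Matrix ι ι R} (hB : B * Bᵀ = -1)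
    (b : ι ⊕ ι → R) :
    b ∈ span R (range (fromCols (1 : Matrix ι ι R) B).row) ↔
      fromCols (1 : Matrix ι ι R) B *ᵥ b = 0 := by
  set G := fromCols (1 : Matrix ι ι R) B
  have hG : G * Gᵀ = 0 := by rw [fromCols_one_mul_transpose, hB, add_neg_cancel]
  rw [← range_vecMulLinear]
  constructor
  · rintro ⟨x, rfl⟩
    rw [vecMulLinear_apply, ← vecMul_transpose, vecMul_vecMul, hG, vecMul_zero]
  · intro hb
    -- `-Bᵀ` is a right inverse of `B`, hence also a left one
    have hBB : Bᵀ * B = -1 := by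
      have : -Bᵀ * B = 1 := mul_eq_one_comm.1 (by rw [mul_neg, hB, neg_neg])
      rw [← neg_neg (Bᵀ * B), ← neg_mul, this]
    have hleft : b ∘ Sum.inl = -(B *ᵥ b ∘ Sum.inr) := by
      rw [fromCols_mulVec, one_mulVec] at hb
      exact eq_neg_of_add_eq_zero_left hb
    refine ⟨b ∘ Sum.inl, ?_⟩
    ext (j | j)
    · simp [G]
    · simp [G, hleft, ← vecMul_transpose, vecMul_vecMul, hBB, vecMul_neg]

theorem isSelfDualCode_span_range_fromCols_one_iff (B : Matrix ι ι R) :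
    IsSelfDualCode (span R (range (fromCols (1 : Matrix ι ι R) B).row)) ↔ B * Bᵀ = -1 := by
  set G := fromCols (1 : Matrix ι ι R) B
  constructor
  · intro hC
    have hG : G * Gᵀ = 0 := by
      ext i j
      have hj : G j ∈ (span R (range G.row) : Set (ι ⊕ ι → R)) := subset_span ⟨j, rfl⟩
      rw [hC] at hj
      exact congrFun ((forall_mem_span_range_dotProduct_eq_zero_iff G _).1 hj) i
    rw [fromCols_one_mul_transpose] at hG
    exact eq_neg_of_add_eq_zero_right hG
  · intro hB
    ext b
    rw [SetLike.mem_coe, mem_span_range_fromCols_one_iff hB]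
    exact (forall_mem_span_range_dotProduct_eq_zero_iff G b).symm

end

theorem image_span_range_eq_span_range_map {R S : Type*} [Semiring R] [Semiring S]
    (σ : R →+* S) [RingHomSurjective σ] {m n : Type*} (M : Matrix m n R) :
    (fun a : n → R => fun p => σ (a p)) '' (span R (range M.row) : Set (n → R)) =
      span S (range (M.map σ).row) := by
  let f : (n → R) →ₛₗ[σ] (n → S) :=
    { toFun := fun a p => σ (a p)
      map_add' := fun a b => by ext p; simp
      map_smul' := fun r a => by ext p; simp }
  change (f : (n → R) → n → S) '' _ = _
  rw [← Submodule.map_coe, Submodule.map_span, ← range_comp]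
  rfl

theorem Rkm_projection_selfDual_free_general (k m n : ℕ)
    (μ : Rkm k m →+* ZMod 2)
    (A : Matrix (Fin n) (Fin n) (Rkm k m))
    (C : Submodule (Rkm k m) (Fin n ⊕ Fin n → Rkm k m))
    (hC : C = Submodule.span (Rkm k m)
      (Set.range fun i : Fin n => Sum.elim (Pi.single i (1 : Rkm k m)) (A i)))
    (hsd : (C : Set (Fin n ⊕ Fin n → Rkm k m)) =
      {b : Fin n ⊕ Fin n → Rkm k m | ∀ a ∈ C, ∑ p, a p * b p = 0}) :
    ((fun a : Fin n ⊕ Fin n → Rkm k m => fun p => μ (a p)) '' (C : Set (Fin n ⊕ Fin n → Rkm k m)) =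
      {w : Fin n ⊕ Fin n → ZMod 2 |
        ∀ x ∈ (fun a : Fin n ⊕ Fin n → Rkm k m => fun p => μ (a p)) ''
            (C : Set (Fin n ⊕ Fin n → Rkm k m)),
          ∑ p, x p * w p = 0}) ∧
    ((fun a : Fin n ⊕ Fin n → Rkm k m => fun p => μ (a p)) '' (C : Set (Fin n ⊕ Fin n → Rkm k m)) =
      (Submodule.span (ZMod 2)
        (Set.range fun i : Fin n =>
          Sum.elim (Pi.single i (1 : ZMod 2)) (fun j => μ (A i j))) :
        Submodule (ZMod 2) (Fin n ⊕ Fin n → ZMod 2))) := by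
  have : RingHomSurjective μ := ⟨ZMod.ringHom_surjective μ⟩
  rw [← row_fromCols_one] at hC
  subst hC
  have hA : A * Aᵀ = -1 := (isSelfDualCode_span_range_fromCols_one_iff A).1 hsd
  have hμA : A.map μ * (A.map μ)ᵀ = -1 := by
    rw [← transpose_map, ← Matrix.map_mul, hA, Matrix.map_neg _ (map_neg μ),
      Matrix.map_one _ μ.map_zero μ.map_one]
  rw [image_span_range_eq_span_range_map, fromCols_map, Matrix.map_one _ μ.map_zero μ.map_one]
  refine ⟨(isSelfDualCode_span_range_fromCols_one_iff _).2 hμA, ?_⟩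
  rw [row_fromCols_one]
  rfl

/-- If the free code `C ⊆ R_{k,m}^{2n}` generated by the rows of `[I_n | A]` is self-dual,
then its projection `μ(C)` is a binary self-dual code of length `2n`; indeed it is the binary
code generated by the rows of `[I_n | μ(A)]`.  Here `μ : R_{k,m} → F_2` is the natural
projection (the ring homomorphism killing `u` and `v`), applied coordinatewise, and a length
`2n` vector is indexed by `Fin n ⊕ Fin n`. -/
theorem Rkm_projection_selfDual_free (k m n : ℕ) (hk : 1 ≤ k) (hm : 1 ≤ m) (hn : 1 ≤ n)
    (μ : Rkm k m →+* ZMod 2) (hμu : μ (Rkm.u k m) = 0) (hμv : μ (Rkm.v k m) = 0)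
    (A : Matrix (Fin n) (Fin n) (Rkm k m))
    (C : Submodule (Rkm k m) (Fin n ⊕ Fin n → Rkm k m))
    (hC : C = Submodule.span (Rkm k m)
      (Set.range fun i : Fin n => Sum.elim (Pi.single i (1 : Rkm k m)) (A i)))
    (hsd : (C : Set (Fin n ⊕ Fin n → Rkm k m)) =
      {b : Fin n ⊕ Fin n → Rkm k m | ∀ a ∈ C, ∑ p, a p * b p = 0}) :
    ((fun a : Fin n ⊕ Fin n → Rkm k m => fun p => μ (a p)) '' (C : Set (Fin n ⊕ Fin n → Rkm k m)) =
      {w : Fin n ⊕ Fin n → ZMod 2 |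
        ∀ x ∈ (fun a : Fin n ⊕ Fin n → Rkm k m => fun p => μ (a p)) ''
            (C : Set (Fin n ⊕ Fin n → Rkm k m)),
          ∑ p, x p * w p = 0}) ∧
    ((fun a : Fin n ⊕ Fin n → Rkm k m => fun p => μ (a p)) '' (C : Set (Fin n ⊕ Fin n → Rkm k m)) =
      (Submodule.span (ZMod 2)
        (Set.range fun i : Fin n =>
          Sum.elim (Pi.single i (1 : ZMod 2)) (fun j => μ (A i j))) :
        Submodule (ZMod 2) (Fin n ⊕ Fin n → ZMod 2))) :=
  Rkm_projection_selfDual_free_general k m n μ A C hC hsd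
end

section
/- Let k ≥ 1, m ≥ 1 and n ≥ 1 be integers, and let A and B be n×n circulant matrices over R_{k,m} satisfying A·Aᵀ + B·Bᵀ = I_n. Then the code of length 4n over R_{k,m} generated by the rows of the block matrix [I_{2n} | M], where M is the 2n×2n block matrix with blocks [[A, B], [Bᵀ, Aᵀ]], is self-dual (the four-circulant construction). -/
open MvPolynomial Matrix

set_option synthInstance.maxHeartbeats 1000000
set_option maxHeartbeats 1000000

/-!
Over a commutative ring, the rows of `[I | M]` are pairwise orthogonal exactly when
`M Mᵀ = -1`; then `Mᵀ M = -1` as well, and a word `(u, v)` orthogonal to every row satisfies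
`u = -M v`, hence `(u, v) = (u, uM)` is the combination `∑ uᵢ · rowᵢ`. In characteristic two the
four-circulant matrix `[[A, B], [Bᵀ, Aᵀ]]` satisfies `M Mᵀ = 1 = -1`, because circulant matrices
commute and the off-diagonal blocks are `AB + BA = 2AB = 0`.
-/

section SystematicCode

variable {R ι : Type*} [CommRing R] [Fintype ι]

theorem dotProduct_eq_zero_of_mem_span {s : Set (ι → R)}
    (hs : ∀ x ∈ s, ∀ y ∈ s, x ⬝ᵥ y = 0) {x y : ι → R}
    (hx : x ∈ Submodule.span R s) (hy : y ∈ Submodule.span R s) : x ⬝ᵥ y = 0 := by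
  induction hx, hy using Submodule.span_induction₂ with
  | mem_mem x y hx hy => exact hs x hx y hy
  | zero_left => exact zero_dotProduct _
  | zero_right => exact dotProduct_zero _
  | add_left _ _ _ _ _ _ h₁ h₂ => rw [add_dotProduct, h₁, h₂, add_zero]
  | add_right _ _ _ _ _ _ h₁ h₂ => rw [dotProduct_add, h₁, h₂, add_zero]
  | smul_left r _ _ _ _ h => rw [smul_dotProduct, h, smul_zero]
  | smul_right r _ _ _ _ h => rw [dotProduct_smul, h, smul_zero]

variable [DecidableEq ι]

/-- Row `i` of the generator matrix `[I | M]`. -/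
def systematicRows (M : Matrix ι ι R) (i : ι) : ι ⊕ ι → R :=
  Sum.elim (Pi.single i 1) (M i)

theorem systematicRows_dotProduct (M : Matrix ι ι R) (i : ι) (w : ι ⊕ ι → R) :
    systematicRows M i ⬝ᵥ w = w (Sum.inl i) + (M *ᵥ (w ∘ Sum.inr)) i := by
  rw [← Sum.elim_comp_inl_inr w, systematicRows, sumElim_dotProduct_sumElim, single_dotProduct,
    one_mul]
  rfl

theorem systematicRows_dotProduct_systematicRows (M : Matrix ι ι R) (i j : ι) :
    systematicRows M i ⬝ᵥ systematicRows M j = (1 + M * Mᵀ) i j := by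
  rw [systematicRows_dotProduct]
  simp [systematicRows, Pi.single_apply, one_apply, mulVec, mul_apply, dotProduct]

theorem sum_smul_systematicRows (M : Matrix ι ι R) (u : ι → R) :
    ∑ i, u i • systematicRows M i = Sum.elim u (u ᵥ* M) := by
  ext (p | q) <;> simp [systematicRows, Finset.sum_apply, vecMul, dotProduct, Pi.single_apply]

theorem eq_sum_smul_systematicRows_of_dotProduct_eq_zero {M : Matrix ι ι R}
    (hM : Mᵀ * M = -1) {w : ι ⊕ ι → R} (hw : ∀ i, systematicRows M i ⬝ᵥ w = 0) :
    w = ∑ i, w (Sum.inl i) • systematicRows M i := by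
  set u := w ∘ Sum.inl
  set v := w ∘ Sum.inr
  have hu : u = -(M *ᵥ v) := funext fun i ↦
    eq_neg_of_add_eq_zero_left <| (systematicRows_dotProduct M i w).symm.trans (hw i)
  have huM : u ᵥ* M = v := by
    rw [hu, neg_vecMul, ← vecMul_transpose, vecMul_vecMul, hM, vecMul_neg, vecMul_one, neg_neg]
  change w = ∑ i, u i • systematicRows M i
  rw [sum_smul_systematicRows, huM, Sum.elim_comp_inl_inr]

theorem span_systematicRows_eq_orthogonal {M : Matrix ι ι R} (hM : M * Mᵀ = -1) :
    (Submodule.span R (Set.range (systematicRows M)) : Set (ι ⊕ ι → R)) =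
      {w | ∀ x ∈ Submodule.span R (Set.range (systematicRows M)), x ⬝ᵥ w = 0} := by
  have hself : ∀ i j, systematicRows M i ⬝ᵥ systematicRows M j = 0 := fun i j ↦ by
    rw [systematicRows_dotProduct_systematicRows, hM, add_neg_cancel, Matrix.zero_apply]
  have hMt : Mᵀ * M = -1 := by
    rw [← neg_eq_iff_eq_neg, ← neg_mul]
    exact mul_eq_one_comm.mp (by rw [mul_neg, hM, neg_neg])
  ext w
  refine ⟨fun hw x hx ↦ dotProduct_eq_zero_of_mem_span ?_ hx hw, fun hw ↦ ?_⟩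
  · rintro _ ⟨i, rfl⟩ _ ⟨j, rfl⟩
    exact hself i j
  · rw [SetLike.mem_coe, eq_sum_smul_systematicRows_of_dotProduct_eq_zero hMt
      fun i ↦ hw _ (Submodule.subset_span ⟨i, rfl⟩)]
    exact Submodule.sum_mem _ fun i _ ↦ Submodule.smul_mem _ _ (Submodule.subset_span ⟨i, rfl⟩)

end SystematicCode

theorem fromBlocks_mul_transpose_eq_one {R ι : Type*} [CommRing R] [Fintype ι] [DecidableEq ι]
    (h2 : (2 : R) = 0) {A B : Matrix ι ι R} (hAB : A * B = B * A) (hA : Aᵀ * A = A * Aᵀ)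
    (hB : Bᵀ * B = B * Bᵀ) (h : A * Aᵀ + B * Bᵀ = 1) :
    fromBlocks A B Bᵀ Aᵀ * (fromBlocks A B Bᵀ Aᵀ)ᵀ = 1 := by
  have hAtBt : Bᵀ * Aᵀ = Aᵀ * Bᵀ := by rw [← transpose_mul, hAB, transpose_mul]
  have hdouble : ∀ X : Matrix ι ι R, X + X = 0 := fun X ↦ by rw [← two_smul R X, h2, zero_smul]
  rw [fromBlocks_transpose, transpose_transpose, transpose_transpose, fromBlocks_multiply, hAB,
    hAtBt, hA, hB, hdouble, hdouble, add_comm (B * Bᵀ), h, fromBlocks_one]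

theorem Rkm_four_circulant_selfDual_general (k m n : ℕ)
    (a b : Fin n → Rkm k m)
    (A B : Matrix (Fin n) (Fin n) (Rkm k m))
    (hA : A = Matrix.circulant a) (hB : B = Matrix.circulant b)
    (hAB : A * Aᵀ + B * Bᵀ = 1)
    (M : Matrix (Fin n ⊕ Fin n) (Fin n ⊕ Fin n) (Rkm k m))
    (hM : M = Matrix.fromBlocks A B Bᵀ Aᵀ)
    (C : Submodule (Rkm k m) ((Fin n ⊕ Fin n) ⊕ (Fin n ⊕ Fin n) → Rkm k m))
    (hC : C = Submodule.span (Rkm k m)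
      (Set.range fun i : Fin n ⊕ Fin n =>
        Sum.elim (Pi.single i (1 : Rkm k m)) (M i))) :
    (C : Set ((Fin n ⊕ Fin n) ⊕ (Fin n ⊕ Fin n) → Rkm k m)) =
      {w : (Fin n ⊕ Fin n) ⊕ (Fin n ⊕ Fin n) → Rkm k m |
        ∀ x ∈ C, ∑ p, x p * w p = 0} := by
  have h2 : (2 : Rkm k m) = 0 := by
    rw [← map_ofNat (algebraMap (ZMod 2) (Rkm k m)) 2, show (2 : ZMod 2) = 0 from rfl, map_zero]
  have hMMt : M * Mᵀ = 1 := by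
    subst hA hB hM
    refine fromBlocks_mul_transpose_eq_one h2 (Fin.circulant_mul_comm a b) ?_ ?_ hAB <;>
      rw [Fin.transpose_circulant] <;> exact Fin.circulant_mul_comm _ _
  have hneg_one : (-1 : Rkm k m) = 1 := neg_eq_of_add_eq_zero_left (one_add_one_eq_two.trans h2)
  subst hC
  refine span_systematicRows_eq_orthogonal ?_
  rw [hMMt, ← neg_one_smul (Rkm k m), hneg_one, one_smul]

/-- The four-circulant construction: if `A`, `B` are `n×n` circulant matrices over `R_{k,m}`
with `A·Aᵀ + B·Bᵀ = I_n`, then the code of length `4n` generated by the rows of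
`[I_{2n} | M]` with `M = [[A, B], [Bᵀ, Aᵀ]]` is self-dual over `R_{k,m}`. -/
theorem Rkm_four_circulant_selfDual (k m n : ℕ) (hk : 1 ≤ k) (hm : 1 ≤ m) (hn : 1 ≤ n)
    (a b : Fin n → Rkm k m)
    (A B : Matrix (Fin n) (Fin n) (Rkm k m))
    (hA : A = Matrix.circulant a) (hB : B = Matrix.circulant b)
    (hAB : A * Aᵀ + B * Bᵀ = 1)
    (M : Matrix (Fin n ⊕ Fin n) (Fin n ⊕ Fin n) (Rkm k m))
    (hM : M = Matrix.fromBlocks A B Bᵀ Aᵀ)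
    (C : Submodule (Rkm k m) ((Fin n ⊕ Fin n) ⊕ (Fin n ⊕ Fin n) → Rkm k m))
    (hC : C = Submodule.span (Rkm k m)
      (Set.range fun i : Fin n ⊕ Fin n =>
        Sum.elim (Pi.single i (1 : Rkm k m)) (M i))) :
    (C : Set ((Fin n ⊕ Fin n) ⊕ (Fin n ⊕ Fin n) → Rkm k m)) =
      {w : (Fin n ⊕ Fin n) ⊕ (Fin n ⊕ Fin n) → Rkm k m |
        ∀ x ∈ C, ∑ p, x p * w p = 0} :=
  Rkm_four_circulant_selfDual_general k m n a b A B hA hB hAB M hM C hC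
end
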